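/- arXiv:1112.4741 — 4 statements merged into one kernel-verified Lean document; each statement's English description precedes it below -/
import Mathlib

section
/- If (a_0,...,a_n) is an ultra-logconcave sequence of nonnegative reals of order n, then the sequence (b_0,...,b_{n-1}) defined by b_i = (i+1)·a_{i+1} is ultra-logconcave of order n-1. -/
/-! The derivative rescales the ultra-logconcavity constants exactly:
`c_{i,n-1} (i+1)² = i (i+2) c_{i+1,n}`, so the inequality for `b` at `i` is the inequality for `a`
at `i + 1` multiplied by `i (i+2) ≥ 0`. -/

noncomputable def cin (n i : ℕ) : ℝ :=
  ((i : ℝ)/((i : ℝ)+1)) * (((n : ℝ)-(i : ℝ))/((n : ℝ)-(i : ℝ)+1))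

def UltraLogConcave (n : ℕ) (a : ℕ → ℝ) : Prop :=
  ∀ i, 1 ≤ i → i ≤ n - 1 → cin n i * (a i)^2 ≥ a (i-1) * a (i+1)

theorem cin_pred_mul_sq {n : ℕ} (hn : 1 ≤ n) (i : ℕ) :
    cin (n - 1) i * ((i : ℝ) + 1) ^ 2 = i * (i + 2) * cin n (i + 1) := by
  rw [cin, cin, Nat.cast_sub hn]
  push_cast
  by_cases hni : (n : ℝ) = i
  · -- both denominators vanish, so both sides are `0` by `x / 0 = 0`
    simp [hni]
  · have h₀ : (n : ℝ) - i ≠ 0 := sub_ne_zero.mpr hni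
    rw [show (n : ℝ) - 1 - i + 1 = n - i by ring, show (n : ℝ) - (i + 1) + 1 = n - i by ring]
    field_simp
    ring

theorem derivative_ULC_general (n : ℕ) (a : ℕ → ℝ)
    (hULC : UltraLogConcave n a) :
    UltraLogConcave (n-1) (fun i => ((i : ℝ)+1) * a (i+1)) := by
  intro i hi hin
  have hsucc := hULC (i + 1) (by omega) (by omega)
  have hpred : i - 1 + 1 = i := by omega
  have hpred_cast : ((i - 1 : ℕ) : ℝ) + 1 = i := by exact_mod_cast hpred
  rw [Nat.add_sub_cancel] at hsucc
  simp only [hpred, hpred_cast, ge_iff_le]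
  calc (i : ℝ) * a i * ((((i + 1 : ℕ) : ℝ) + 1) * a (i + 1 + 1))
      = i * (i + 2) * (a i * a (i + 1 + 1)) := by push_cast; ring
    _ ≤ i * (i + 2) * (cin n (i + 1) * a (i + 1) ^ 2) := by gcongr
    _ = cin (n - 1) i * (((i : ℝ) + 1) * a (i + 1)) ^ 2 := by
      rw [mul_pow, ← mul_assoc, ← cin_pred_mul_sq (by omega)]; ring

theorem derivative_ULC (n : ℕ) (hn : 1 ≤ n) (a : ℕ → ℝ)
    (ha : ∀ i ≤ n, 0 ≤ a i) (hULC : UltraLogConcave n a) :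
    UltraLogConcave (n-1) (fun i => ((i : ℝ)+1) * a (i+1)) :=
  derivative_ULC_general n a hULC
end

section
/- If (a_0,...,a_n) is an ultra-logconcave sequence of nonnegative reals of order n, then the sequence (b_0,...,b_{n+1}) defined by b_0 = 0 and b_i = a_{i-1}/i for 1 ≤ i ≤ n+1 is ultra-logconcave of order n+1. -/
lemma cin_nonneg {n i : ℕ} (h : i ≤ n) : 0 ≤ cin n i := by
  have : (i : ℝ) ≤ n := by exact_mod_cast h
  unfold cin
  exact mul_nonneg (by positivity) (div_nonneg (by linarith) (by linarith))

lemma cin_succ_succ_mul (n j : ℕ) :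
    cin (n + 1) (j + 1) * (j * (j + 1 + 1)) = cin n j * (j + 1) ^ 2 := by
  unfold cin
  push_cast
  field_simp
  ring

lemma div_mul_div_le_cin_succ_succ_mul_sq {n j : ℕ} {x y z : ℝ} (hj : 0 < j)
    (h : x * z ≤ cin n j * y ^ 2) :
    x / j * (z / (j + 1 + 1)) ≤ cin (n + 1) (j + 1) * (y / (j + 1)) ^ 2 := by
  have hj' : (0 : ℝ) < j := by exact_mod_cast hj
  rw [div_mul_div_comm, div_le_iff₀ (by positivity)]
  calc x * z ≤ cin n j * y ^ 2 := h
    _ = cin (n + 1) (j + 1) * (y / (j + 1)) ^ 2 * (j * (j + 1 + 1)) := by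
      rw [div_pow, mul_right_comm, cin_succ_succ_mul]
      field_simp

theorem antiderivative_ULC_general (n : ℕ) (a : ℕ → ℝ)
    (hULC : UltraLogConcave n a) :
    UltraLogConcave (n+1) (fun i => if i = 0 then 0 else a (i-1) / (i : ℝ)) := by
  intro i hi hin
  obtain ⟨j, rfl⟩ : ∃ j, i = j + 1 := ⟨i - 1, by omega⟩
  rcases Nat.eq_zero_or_pos j with rfl | hj
  · simpa using mul_nonneg (cin_nonneg (Nat.le_add_left 1 n)) (sq_nonneg (a 0))
  · simpa [hj.ne'] using div_mul_div_le_cin_succ_succ_mul_sq hj (hULC j hj (by omega))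

theorem antiderivative_ULC (n : ℕ) (a : ℕ → ℝ)
    (ha : ∀ i ≤ n, 0 ≤ a i) (hULC : UltraLogConcave n a) :
    UltraLogConcave (n+1) (fun i => if i = 0 then 0 else a (i-1) / (i : ℝ)) :=
  antiderivative_ULC_general n a hULC
end

section
/- (Newton's inequalities) Let γ_1,...,γ_n be nonnegative real numbers and let e_i = e_i(γ_1,...,γ_n) denote the i-th elementary symmetric polynomial. Then for all 1 ≤ i ≤ n-1, (e_i/C(n,i))² ≥ (e_{i-1}/C(n,i-1))·(e_{i+1}/C(n,i+1)). Equivalently, the sequence (e_0, e_1, ..., e_n) is ultra-logconcave of order n. -/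
/-!
Write `M_k = e_k / C(m, k)` for the normalised elementary symmetric means of a multiset of size
`m`. Adjoining one more element `t` gives `(m + 1) M'_k = (m + 1 - k) M_k + k t M_{k-1}`, so by
induction on the multiset it suffices to show that log-concavity of `M` at `k - 1` and `k`
implies log-concavity of `M'` at `k`. Besides the two hypotheses `M_{k-1} M_{k+1} ≤ M_k²` and
`M_k M_{k+2} ≤ M_{k+1}²`, this uses their consequence `M_{k-1} M_{k+2} ≤ M_k M_{k+1}`, which holds
because for nonnegative entries `e_k = 0` forces `e_{k+1} = 0`. With these three inequalities the
difference `M'_k² - M'_{k-1} M'_{k+1}` is an explicit sum of nonnegative terms.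
-/

section LogConcave

variable {R : Type*} [Field R] [LinearOrder R] [IsStrictOrderedRing R]

theorem mul_le_mul_of_logConcave {a b c d : R} (hb : 0 ≤ b) (hc : 0 ≤ c) (hd : 0 ≤ d)
    (hbc : b = 0 → c = 0) (hcd : c = 0 → d = 0) (h₁ : a * c ≤ b ^ 2) (h₂ : b * d ≤ c ^ 2) :
    a * d ≤ b * c := by
  rcases hb.eq_or_lt with rfl | hb
  · simp [hcd (hbc rfl)]
  rcases hc.eq_or_lt with rfl | hc
  · simp [hcd rfl]
  have : a * d * (b * c) ≤ b * c * (b * c) :=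
    calc a * d * (b * c) = a * c * (b * d) := by ring
      _ ≤ b ^ 2 * c ^ 2 := mul_le_mul h₁ h₂ (by positivity) (by positivity)
      _ = b * c * (b * c) := by ring
  exact le_of_mul_le_mul_right this (by positivity)

/- With `p = m - k`, the factors are `(m + 1)` times `M'_k`, `M'_{k+2}`, `M'_{k+1}`, and
`a, b, c, d` are `M_{k-1}, …, M_{k+2}` (see the header). -/
theorem mul_le_sq_of_logConcave {p k t a b c d : R} (hp : 1 ≤ p) (hk : 0 ≤ k) (ht : 0 ≤ t)
    (h₁ : a * c ≤ b ^ 2) (h₂ : b * d ≤ c ^ 2) (h₃ : a * d ≤ b * c) :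
    ((p + 1) * b + k * t * a) * ((p - 1) * d + (k + 2) * t * c) ≤ (p * c + (k + 1) * t * b) ^ 2 := by
  have e₁ : 0 ≤ k * (k + 2) * t ^ 2 * (b ^ 2 - a * c) := by
    have := sub_nonneg.2 h₁
    positivity
  have e₂ : 0 ≤ k * (p - 1) * t * (b * c - a * d) := by
    have := sub_nonneg.2 h₃
    have := sub_nonneg.2 hp
    positivity
  have e₃ : 0 ≤ (p ^ 2 - 1) * (c ^ 2 - b * d) := mul_nonneg (by nlinarith) (sub_nonneg.2 h₂)
  linear_combination e₁ + e₂ + e₃ + sq_nonneg (c - t * b)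

end LogConcave

namespace Multiset

section CommSemiring

variable {R : Type*} [CommSemiring R]

theorem esymm_zero (s : Multiset R) : s.esymm 0 = 1 := by
  simp [esymm, powersetCard_zero_left]

theorem esymm_cons_succ (a : R) (s : Multiset R) (k : ℕ) :
    (a ::ₘ s).esymm (k + 1) = s.esymm (k + 1) + a * s.esymm k := by
  simp only [esymm, powersetCard_cons, map_add, sum_add, map_map, Function.comp_def, prod_cons,
    sum_map_mul_left]

theorem esymm_eq_zero_of_card_lt {s : Multiset R} {k : ℕ} (h : card s < k) : s.esymm k = 0 := by
  simp [esymm, powersetCard_eq_empty _ h]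

end CommSemiring

section OrderedSemiring

variable {R : Type*} [CommSemiring R] [PartialOrder R] [IsOrderedRing R]

theorem esymm_nonneg {s : Multiset R} (hs : ∀ x ∈ s, 0 ≤ x) (k : ℕ) : 0 ≤ s.esymm k := by
  refine sum_nonneg fun x hx => ?_
  obtain ⟨t, ht, rfl⟩ := mem_map.1 hx
  exact prod_nonneg fun a ha => hs a (mem_of_le (mem_powersetCard.1 ht).1 ha)

theorem esymm_succ_eq_zero {s : Multiset R} (hs : ∀ x ∈ s, 0 ≤ x) {k : ℕ}
    (h : s.esymm k = 0) : s.esymm (k + 1) = 0 := by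
  induction s using Multiset.induction_on generalizing k with
  | empty => exact esymm_eq_zero_of_card_lt (by simp)
  | cons t s ih =>
    have ht : 0 ≤ t := hs t (mem_cons_self t s)
    have hs' : ∀ x ∈ s, 0 ≤ x := fun x hx => hs x (mem_cons_of_mem hx)
    cases k with
    | zero => rw [esymm_zero] at h; rw [← mul_one ((t ::ₘ s).esymm _), h, mul_zero]
    | succ k =>
      rw [esymm_cons_succ] at h
      obtain ⟨h₁, -⟩ := (add_eq_zero_iff_of_nonneg (esymm_nonneg hs' _)
        (mul_nonneg ht (esymm_nonneg hs' _))).1 h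
      rw [esymm_cons_succ, ih hs' h₁, h₁, mul_zero, add_zero]

end OrderedSemiring

section Field

variable {R : Type*} [Field R]

def esymmMean (s : Multiset R) (k : ℕ) : R :=
  s.esymm k / (card s).choose k

theorem esymmMean_zero (s : Multiset R) : s.esymmMean 0 = 1 := by
  simp [esymmMean, esymm_zero]

theorem esymmMean_eq_zero_of_card_lt {s : Multiset R} {k : ℕ} (h : card s < k) :
    s.esymmMean k = 0 := by
  rw [esymmMean, esymm_eq_zero_of_card_lt h, zero_div]

theorem choose_mul_esymmMean [CharZero R] (s : Multiset R) (k : ℕ) :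
    (card s).choose k * s.esymmMean k = s.esymm k := by
  rcases lt_or_ge (card s) k with hk | hk
  · rw [esymm_eq_zero_of_card_lt hk, Nat.choose_eq_zero_of_lt hk, Nat.cast_zero, zero_mul]
  · exact mul_div_cancel₀ _ (by exact_mod_cast (Nat.choose_pos hk).ne')

theorem card_add_one_mul_esymmMean_cons_succ [CharZero R] (a : R) {s : Multiset R} {k : ℕ}
    (hk : k ≤ card s) :
    (card s + 1) * (a ::ₘ s).esymmMean (k + 1) =
      (card s - k) * s.esymmMean (k + 1) + (k + 1) * a * s.esymmMean k := by
  rw [esymmMean.eq_1 (a ::ₘ s), card_cons, esymm_cons_succ, ← choose_mul_esymmMean s k,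
    ← choose_mul_esymmMean s (k + 1)]
  generalize card s = m at hk ⊢
  have hC : ((m + 1).choose (k + 1) : R) ≠ 0 := by
    exact_mod_cast (Nat.choose_pos (by omega)).ne'
  have h₁ : (m.choose (k + 1) : R) * (m + 1) = (m + 1).choose (k + 1) * (m - k) := by
    have := Nat.choose_mul_succ_eq m (k + 1)
    rw [show m + 1 - (k + 1) = m - k by omega] at this
    exact_mod_cast this
  have h₂ : ((m + 1 : ℕ) : R) * m.choose k = (m + 1).choose (k + 1) * (k + 1) := by
    exact_mod_cast Nat.add_one_mul_choose_eq m k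
  rw [mul_div_assoc', div_eq_iff hC]
  push_cast at h₂ ⊢
  linear_combination s.esymmMean (k + 1) * h₁ + a * s.esymmMean k * h₂

end Field

section OrderedField

variable {R : Type*} [Field R] [LinearOrder R] [IsStrictOrderedRing R]

theorem esymmMean_nonneg {s : Multiset R} (hs : ∀ x ∈ s, 0 ≤ x) (k : ℕ) : 0 ≤ s.esymmMean k :=
  div_nonneg (esymm_nonneg hs k) (Nat.cast_nonneg _)

theorem esymmMean_succ_eq_zero {s : Multiset R} (hs : ∀ x ∈ s, 0 ≤ x) {k : ℕ}
    (h : s.esymmMean k = 0) : s.esymmMean (k + 1) = 0 := by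
  rcases lt_or_ge (card s) (k + 1) with hk | hk
  · exact esymmMean_eq_zero_of_card_lt hk
  have hC : ((card s).choose k : R) ≠ 0 := by exact_mod_cast (Nat.choose_pos (by omega)).ne'
  rw [esymmMean, div_eq_zero_iff, or_iff_left hC] at h
  rw [esymmMean, esymm_succ_eq_zero hs h, zero_div]

theorem esymmMean_cons_mul_le_sq {t a : R} {s : Multiset R} {k : ℕ} (ht : 0 ≤ t)
    (hk : k + 1 ≤ card s)
    (hX : (card s + 1) * (t ::ₘ s).esymmMean k = (card s - k + 1) * s.esymmMean k + k * t * a)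
    (h₁ : a * s.esymmMean (k + 1) ≤ s.esymmMean k ^ 2)
    (h₂ : s.esymmMean k * s.esymmMean (k + 2) ≤ s.esymmMean (k + 1) ^ 2)
    (h₃ : a * s.esymmMean (k + 2) ≤ s.esymmMean k * s.esymmMean (k + 1)) :
    (t ::ₘ s).esymmMean k * (t ::ₘ s).esymmMean (k + 2) ≤ (t ::ₘ s).esymmMean (k + 1) ^ 2 := by
  have hp : (1 : R) ≤ card s - k := by rw [le_sub_iff_add_le']; exact_mod_cast hk
  have hY := card_add_one_mul_esymmMean_cons_succ t (s := s) (k := k) (by omega)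
  have hZ := card_add_one_mul_esymmMean_cons_succ t hk
  set M := s.esymmMean
  set M' := (t ::ₘ s).esymmMean
  set m : R := (card s : R)
  refine le_of_mul_le_mul_left ?_ (by positivity : (0 : R) < (m + 1) ^ 2)
  calc (m + 1) ^ 2 * (M' k * M' (k + 2))
      = ((m + 1) * M' k) * ((m + 1) * M' (k + 1 + 1)) := by ring
    _ = ((m - k + 1) * M k + k * t * a) * ((m - k - 1) * M (k + 2) + (k + 2) * t * M (k + 1)) := by
        rw [hX, hZ]; push_cast; ring
    _ ≤ ((m - k) * M (k + 1) + (k + 1) * t * M k) ^ 2 :=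
        mul_le_sq_of_logConcave hp k.cast_nonneg ht h₁ h₂ h₃
    _ = (m + 1) ^ 2 * M' (k + 1) ^ 2 := by rw [← hY]; ring

theorem esymmMean_mul_le_sq {s : Multiset R} (hs : ∀ x ∈ s, 0 ≤ x) (k : ℕ) :
    s.esymmMean k * s.esymmMean (k + 2) ≤ s.esymmMean (k + 1) ^ 2 := by
  induction s using Multiset.induction_on generalizing k with
  | empty =>
    rw [esymmMean_eq_zero_of_card_lt (k := k + 2) (by simp), mul_zero]
    positivity
  | cons t s ih =>
    have ht : 0 ≤ t := hs t (mem_cons_self t s)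
    have hs' : ∀ x ∈ s, 0 ≤ x := fun x hx => hs x (mem_cons_of_mem hx)
    have hM : ∀ j, 0 ≤ s.esymmMean j := esymmMean_nonneg hs'
    rcases lt_or_ge (card s) (k + 1) with hk | hk
    · rw [esymmMean_eq_zero_of_card_lt (k := k + 2) (by simpa using hk), mul_zero]
      positivity
    cases k with
    | zero =>
      -- `M_{-1}` would enter with coefficient `k = 0`, so `a = 0` serves.
      refine esymmMean_cons_mul_le_sq (a := 0) ht hk ?_ ?_ (ih hs' 0) ?_
      · simp [esymmMean_zero]
      · rw [zero_mul]; positivity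
      · rw [zero_mul]; exact mul_nonneg (hM 0) (hM 1)
    | succ k =>
      refine esymmMean_cons_mul_le_sq ht hk ?_ (ih hs' k) (ih hs' (k + 1)) <|
        mul_le_mul_of_logConcave (hM _) (hM _) (hM _) (esymmMean_succ_eq_zero hs')
          (esymmMean_succ_eq_zero hs') (ih hs' k) (ih hs' (k + 1))
      rw [card_add_one_mul_esymmMean_cons_succ t (by omega)]
      push_cast
      ring

end OrderedField

end Multiset

theorem newton_inequalities_general (n : ℕ) (γ : Fin n → ℝ) (hγ : ∀ j, 0 ≤ γ j)
    (e : ℕ → ℝ)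
    (he : ∀ i, e i = ∑ J ∈ Finset.univ.powersetCard i, ∏ j ∈ J, γ j)
    (i : ℕ) (hi1 : 1 ≤ i) :
    (e i / (n.choose i : ℝ))^2 ≥
      (e (i-1) / (n.choose (i-1) : ℝ)) * (e (i+1) / (n.choose (i+1) : ℝ)) := by
  set s : Multiset ℝ := Finset.univ.val.map γ
  have hs : ∀ x ∈ s, 0 ≤ x := by simpa [s] using hγ
  have hM (k : ℕ) : e k / n.choose k = s.esymmMean k := by
    rw [he, ← Finset.esymm_map_val, Multiset.esymmMean, Multiset.card_map, Finset.card_val,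
      Finset.card_univ, Fintype.card_fin]
  obtain ⟨k, rfl⟩ : ∃ k, i = k + 1 := ⟨i - 1, by omega⟩
  simpa only [hM, add_tsub_cancel_right] using Multiset.esymmMean_mul_le_sq hs k

theorem newton_inequalities (n : ℕ) (γ : Fin n → ℝ) (hγ : ∀ j, 0 ≤ γ j)
    (e : ℕ → ℝ)
    (he : ∀ i, e i = ∑ J ∈ Finset.univ.powersetCard i, ∏ j ∈ J, γ j)
    (i : ℕ) (hi1 : 1 ≤ i) (hi2 : i ≤ n - 1) :
    (e i / (n.choose i : ℝ))^2 ≥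
      (e (i-1) / (n.choose (i-1) : ℝ)) * (e (i+1) / (n.choose (i+1) : ℝ)) :=
  newton_inequalities_general n γ hγ e he i hi1
end

section
/- There exists a complex number z with Re(z) > 0 and Im(z) > 0 such that Σ_{i=3}^{8} C(10,i)·z^i = 0. Consequently, the truncated binomial polynomial P^{10}_{3,8}(z) = 120z³ + 210z⁴ + 252z⁵ + 210z⁶ + 120z⁷ + 45z⁸ is not a weakly stable polynomial. -/
/-!
Since `p' / p = ∑ 1 / (c - z)` over the roots `z` of a split polynomial `p`, some root lies
within `deg p * ‖p c‖ / ‖p' c‖` of any point `c`. At `c = 0.0159 + 1.1903 i` the polynomial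
`P^{10}_{3,8}` has `‖P c‖ ≤ 1/25` and `‖P' c‖ ≥ 557`, so it has a root within `10⁻³` of `c`,
which therefore lies in the open first quadrant.
-/

open Polynomial Finset Complex

theorem Polynomial.Splits.exists_mem_roots_norm_sub_mul_le {K : Type*} [NormedField K]
    {p : K[X]} (hp : p.Splits) {c : K} (hc : p.derivative.eval c ≠ 0) :
    ∃ z ∈ p.roots, ‖c - z‖ * ‖p.derivative.eval c‖ ≤ p.natDegree * ‖p.eval c‖ := by
  have hp0 : p ≠ 0 := by rintro rfl; simp at hc
  by_cases h0 : p.eval c = 0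
  · exact ⟨c, (mem_roots hp0).2 h0, by simp [h0]⟩
  have hlog := hp.eval_derivative_div_eval_of_ne_zero h0
  have hroots : p.roots ≠ 0 := by
    intro h
    rw [h, Multiset.map_zero, Multiset.sum_zero, div_eq_zero_iff] at hlog
    exact hlog.elim hc h0
  obtain ⟨z, hz, hmin⟩ := p.roots.exists_min_image (fun w ↦ ‖c - w‖) hroots
  have hcz : 0 < ‖c - z‖ := by
    rw [norm_pos_iff, sub_ne_zero]
    rintro rfl
    exact h0 (isRoot_of_mem_roots hz)
  have key : ‖p.derivative.eval c‖ / ‖p.eval c‖ ≤ p.natDegree * ‖c - z‖⁻¹ := calc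
    _ = ‖(p.roots.map fun w ↦ 1 / (c - w)).sum‖ := by rw [← hlog, norm_div]
    _ ≤ (p.roots.map fun w ↦ ‖c - w‖⁻¹).sum :=
      (norm_multiset_sum_le _).trans_eq (by simp [Multiset.map_map])
    _ ≤ (p.roots.map fun _ ↦ ‖c - z‖⁻¹).sum :=
      Multiset.sum_map_le_sum_map _ _ fun w hw ↦ inv_anti₀ hcz (hmin w hw)
    _ ≤ p.natDegree * ‖c - z‖⁻¹ := by
      rw [Multiset.map_const', Multiset.sum_replicate, nsmul_eq_mul]
      gcongr
      exact_mod_cast card_roots' p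
  refine ⟨z, hz, ?_⟩
  rw [div_le_iff₀ (norm_pos_iff.2 h0)] at key
  calc ‖c - z‖ * ‖p.derivative.eval c‖
      ≤ ‖c - z‖ * (p.natDegree * ‖c - z‖⁻¹ * ‖p.eval c‖) := by gcongr
    _ = p.natDegree * ‖p.eval c‖ := by field_simp

noncomputable def truncatedBinomial (n a b : ℕ) : ℂ[X] :=
  ∑ i ∈ Icc a b, C (n.choose i : ℂ) * X ^ i

theorem eval_truncatedBinomial (n a b : ℕ) (z : ℂ) :
    (truncatedBinomial n a b).eval z = ∑ i ∈ Icc a b, (n.choose i : ℂ) * z ^ i := by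
  simp [truncatedBinomial, eval_finsetSum]

theorem natDegree_truncatedBinomial_le (n a b : ℕ) : (truncatedBinomial n a b).natDegree ≤ b :=
  natDegree_sum_le_of_forall_le _ _ fun _ hi ↦
    (natDegree_C_mul_X_pow_le _ _).trans (mem_Icc.1 hi).2

theorem truncatedBinomial_10_3_8 : truncatedBinomial 10 3 8 =
    120 * X ^ 3 + 210 * X ^ 4 + 252 * X ^ 5 + 210 * X ^ 6 + 120 * X ^ 7 + 45 * X ^ 8 := by
  simp [truncatedBinomial, Finset.sum_Icc_succ_top, Nat.choose]

theorem eval_truncatedBinomial_10_3_8 (z : ℂ) :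
    (truncatedBinomial 10 3 8).eval z =
      120 * z ^ 3 + 210 * z ^ 4 + 252 * z ^ 5 + 210 * z ^ 6 + 120 * z ^ 7 + 45 * z ^ 8 := by
  simp [truncatedBinomial_10_3_8]

theorem eval_derivative_truncatedBinomial_10_3_8 (z : ℂ) :
    (truncatedBinomial 10 3 8).derivative.eval z =
      360 * z ^ 2 + 840 * z ^ 3 + 1260 * z ^ 4 + 1260 * z ^ 5 + 840 * z ^ 6 + 360 * z ^ 7 := by
  simp [truncatedBinomial_10_3_8]
  ring

noncomputable def approxRoot : ℂ := ⟨159 / 10000, 11903 / 10000⟩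

theorem norm_eval_approxRoot_le : ‖(truncatedBinomial 10 3 8).eval approxRoot‖ ≤ 1 / 25 := by
  rw [← sq_le_sq₀ (norm_nonneg _) (by norm_num), Complex.sq_norm, eval_truncatedBinomial_10_3_8]
  norm_num [approxRoot, Complex.normSq_apply, pow_succ]

theorem le_norm_eval_derivative_approxRoot :
    557 ≤ ‖(truncatedBinomial 10 3 8).derivative.eval approxRoot‖ := by
  rw [← sq_le_sq₀ (by norm_num) (norm_nonneg _), Complex.sq_norm,
    eval_derivative_truncatedBinomial_10_3_8]
  norm_num [approxRoot, Complex.normSq_apply, pow_succ]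

theorem exists_isRoot_truncatedBinomial_10_3_8_near_approxRoot :
    ∃ z, (truncatedBinomial 10 3 8).IsRoot z ∧ ‖approxRoot - z‖ ≤ 1 / 1000 := by
  have hderiv := le_norm_eval_derivative_approxRoot
  obtain ⟨z, hz, hdist⟩ := (IsAlgClosed.splits _).exists_mem_roots_norm_sub_mul_le
    (norm_pos_iff.1 (by linarith : 0 < ‖(truncatedBinomial 10 3 8).derivative.eval approxRoot‖))
  refine ⟨z, isRoot_of_mem_roots hz, ?_⟩
  have : ‖approxRoot - z‖ * 557 ≤ 8 * (1 / 25) := calc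
    _ ≤ ‖approxRoot - z‖ * ‖(truncatedBinomial 10 3 8).derivative.eval approxRoot‖ := by gcongr
    _ ≤ (truncatedBinomial 10 3 8).natDegree * ‖(truncatedBinomial 10 3 8).eval approxRoot‖ := hdist
    _ ≤ 8 * (1 / 25) := by
      gcongr
      · exact_mod_cast natDegree_truncatedBinomial_le 10 3 8
      · exact norm_eval_approxRoot_le
  linarith

theorem P_10_3_8_not_weakly_stable :
    (∃ z : ℂ, 0 < z.re ∧ 0 < z.im ∧
        ∑ i ∈ Finset.Icc 3 8, (Nat.choose 10 i : ℂ) * z ^ i = 0) ∧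
      ¬(∀ z : ℂ, 120*z^3 + 210*z^4 + 252*z^5 + 210*z^6 + 120*z^7 + 45*z^8 = 0 →
          z ≠ 0 → z.re < 0) := by
  obtain ⟨z, hz, hdist⟩ := exists_isRoot_truncatedBinomial_10_3_8_near_approxRoot
  have hre := abs_le.1 ((abs_re_le_norm _).trans hdist)
  have him := abs_le.1 ((abs_im_le_norm _).trans hdist)
  simp only [sub_re, sub_im, approxRoot] at hre him
  have hz_re : 0 < z.re := by linarith
  have hz_im : 0 < z.im := by linarith
  refine ⟨⟨z, hz_re, hz_im, by rwa [← eval_truncatedBinomial]⟩, fun hstable ↦ ?_⟩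
  have := hstable z (by rwa [← eval_truncatedBinomial_10_3_8]) (by rintro rfl; simp at hz_re)
  linarith
end
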